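/- For any g ∈ GL_d(R) with singular values σ_1 ≥ ... ≥ σ_d and any nonzero x ∈ R^d, one has ∠(x̄, V_g^-)·∠(gx̄, V_g^+) ≤ σ_{r+1}(g)/σ_r(g). -/

import Mathlib

noncomputable section

abbrev Euc (d : ℕ) := EuclideanSpace ℝ (Fin d)

/-- `∠(x̄, W) = ‖π_{W^⊥}(x)‖ / ‖x‖`, the sine of the angle between the line `ℝx` and `W`. -/
def angLine {d : ℕ} (x : Euc d) (W : Submodule ℝ (Euc d)) : ℝ :=
  ‖(Wᗮ.orthogonalProjectionOnto x : Euc d)‖ / ‖x‖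

/-- `∠(ȳ, V) = dist(y/‖y‖, V)`. -/
def angDist {d : ℕ} (y : Euc d) (V : Submodule ℝ (Euc d)) : ℝ :=
  Metric.infDist (‖y‖⁻¹ • y) (V : Set (Euc d))

/-- The span of the first `r` standard basis vectors of `ℝ^d`. -/
def stdSpanLT (d r : ℕ) : Submodule ℝ (Euc d) :=
  Submodule.span ℝ ((fun i => EuclideanSpace.single i (1 : ℝ)) '' {i : Fin d | (i : ℕ) < r})

/-- The span of the standard basis vectors `e_i` of `ℝ^d` with `r ≤ i`. -/
def stdSpanGE (d r : ℕ) : Submodule ℝ (Euc d) :=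
  Submodule.span ℝ ((fun i => EuclideanSpace.single i (1 : ℝ)) '' {i : Fin d | r ≤ (i : ℕ)})

/-!
Put `y = l x` and `z = k⁻¹ (g x)`, so that `z i = σ i * y i`. Since `k` and `l` are isometries,
the two angles become `‖y_{<r}‖ / ‖y‖` and `‖z_{≥r}‖ / ‖z‖`, where `v_{<r}` and `v_{≥r}` keep the
coordinates below, resp. from, `r`. As `σ` is antitone,
`σ (r-1) ‖y_{<r}‖ ≤ ‖z_{<r}‖ ≤ ‖z‖` and `‖z_{≥r}‖ ≤ σ r ‖y_{≥r}‖ ≤ σ r ‖y‖`; multiplying the two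
bounds gives the claim.
-/

theorem Submodule.infDist_eq_norm_starProjection_orthogonal {𝕜 E : Type*} [RCLike 𝕜]
    [NormedAddCommGroup E] [InnerProductSpace 𝕜 E] (K : Submodule 𝕜 E)
    [K.HasOrthogonalProjection] (u : E) :
    Metric.infDist u K = ‖Kᗮ.starProjection u‖ := by
  rw [Metric.infDist_eq_iInf, Submodule.starProjection_orthogonal_val,
    Submodule.starProjection_minimal]
  simp_rw [dist_eq_norm]
  rfl

theorem Submodule.norm_starProjection_orthogonal_map {𝕜 E : Type*} [RCLike 𝕜]
    [NormedAddCommGroup E] [InnerProductSpace 𝕜 E] [CompleteSpace E] (e : E ≃ₗᵢ[𝕜] E)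
    (W : Submodule 𝕜 E) [W.HasOrthogonalProjection] (y : E) :
    ‖(W.map (e.toLinearEquiv : E →ₗ[𝕜] E))ᗮ.starProjection y‖ =
      ‖Wᗮ.starProjection (e.symm y)‖ := by
  simp only [← Submodule.map_orthogonal_equiv, Submodule.starProjection_map_apply,
    LinearIsometryEquiv.norm_map]

section CoordSpan

variable {ι : Type*} [Fintype ι]

theorem EuclideanSpace.mul_norm_le_mul_norm_of_forall_abs_le {a b : ℝ} (ha : 0 ≤ a) (hb : 0 ≤ b)
    {u v : EuclideanSpace ℝ ι} (h : ∀ i, a * |u i| ≤ b * |v i|) : a * ‖u‖ ≤ b * ‖v‖ := by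
  rw [← pow_le_pow_iff_left₀ (by positivity) (by positivity) two_ne_zero, mul_pow, mul_pow,
    EuclideanSpace.norm_sq_eq, EuclideanSpace.norm_sq_eq, Finset.mul_sum, Finset.mul_sum]
  refine Finset.sum_le_sum fun i _ => ?_
  rw [← mul_pow, ← mul_pow, Real.norm_eq_abs, Real.norm_eq_abs]
  exact pow_le_pow_left₀ (by positivity) (h i) 2

variable [DecidableEq ι]

def coordSpan (s : Set ι) : Submodule ℝ (EuclideanSpace ℝ ι) :=
  Submodule.span ℝ ((fun i => EuclideanSpace.single i (1 : ℝ)) '' s)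

theorem mem_coordSpan_iff {s : Set ι} {v : EuclideanSpace ℝ ι} :
    v ∈ coordSpan s ↔ ∀ i ∉ s, v i = 0 := by
  constructor
  · intro hv
    induction hv using Submodule.span_induction with
    | mem u hu =>
      obtain ⟨j, hj, rfl⟩ := hu
      intro i hi
      simp [ne_of_mem_of_not_mem hj hi |>.symm]
    | zero => simp
    | add u w _ _ hu hw => intro i hi; simp [hu i hi, hw i hi]
    | smul c u _ hu => intro i hi; simp [hu i hi]
  · intro h
    rw [← (EuclideanSpace.basisFun ι ℝ).sum_repr v]
    refine Submodule.sum_mem _ fun i _ => ?_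
    by_cases hi : i ∈ s
    · exact Submodule.smul_mem _ _ (Submodule.subset_span ⟨i, hi, by simp⟩)
    · simp [h i hi]

theorem starProjection_coordSpan (s : Set ι) (y : EuclideanSpace ℝ ι) :
    (coordSpan s).starProjection y = WithLp.toLp 2 (s.indicator y) := by
  refine Submodule.eq_starProjection_of_mem_of_inner_eq_zero ?_ fun w hw => ?_
  · rw [mem_coordSpan_iff]
    intro i hi
    simp [hi]
  · rw [mem_coordSpan_iff] at hw
    rw [PiLp.inner_apply]
    refine Finset.sum_eq_zero fun i _ => ?_
    by_cases hi : i ∈ s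
    · simp [hi]
    · simp [hw i hi]

theorem orthogonal_coordSpan (s : Set ι) : (coordSpan s)ᗮ = coordSpan sᶜ := by
  ext v
  rw [← Submodule.starProjection_apply_eq_zero_iff, starProjection_coordSpan, mem_coordSpan_iff]
  simp [funext_iff, Set.indicator_apply_eq_zero]

theorem norm_starProjection_coordSpan_div_mul_le {s : Set ι} {σ : ι → ℝ} {a b : ℝ}
    (ha : 0 < a) (hb : 0 ≤ b) (hσs : ∀ i ∈ s, a ≤ |σ i|) (hσsc : ∀ i ∉ s, |σ i| ≤ b)
    {y z : EuclideanSpace ℝ ι} (hz : ∀ i, z i = σ i * y i) :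
    ‖(coordSpan s).starProjection y‖ / ‖y‖ * (‖(coordSpan sᶜ).starProjection z‖ / ‖z‖) ≤
      b / a := by
  have hlower : a * ‖(coordSpan s).starProjection y‖ ≤ 1 * ‖z‖ := by
    refine EuclideanSpace.mul_norm_le_mul_norm_of_forall_abs_le ha.le zero_le_one fun i => ?_
    by_cases hi : i ∈ s
    · simpa [starProjection_coordSpan, hi, hz, abs_mul] using
        mul_le_mul_of_nonneg_right (hσs i hi) (abs_nonneg (y i))
    · simp [starProjection_coordSpan, hi]
  have hupper : 1 * ‖(coordSpan sᶜ).starProjection z‖ ≤ b * ‖y‖ := by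
    refine EuclideanSpace.mul_norm_le_mul_norm_of_forall_abs_le zero_le_one hb fun i => ?_
    by_cases hi : i ∈ s
    · simp [starProjection_coordSpan, hi]; positivity
    · simpa [starProjection_coordSpan, hi, hz, abs_mul] using
        mul_le_mul_of_nonneg_right (hσsc i hi) (abs_nonneg (y i))
  rcases (norm_nonneg y).eq_or_lt with hy0 | hy0
  · simp [← hy0]; positivity
  rcases (norm_nonneg z).eq_or_lt with hz0 | hz0
  · simp [← hz0]; positivity
  rw [div_mul_div_comm, div_le_div_iff₀ (by positivity) ha]
  calc _ = ‖(coordSpan sᶜ).starProjection z‖ * (a * ‖(coordSpan s).starProjection y‖) := by ring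
    _ ≤ (b * ‖y‖) * ‖z‖ := by gcongr <;> linarith
    _ = _ := by ring

end CoordSpan

section Angles

variable {d : ℕ}

theorem angLine_eq (x : Euc d) (W : Submodule ℝ (Euc d)) :
    angLine x W = ‖Wᗮ.starProjection x‖ / ‖x‖ :=
  rfl

theorem angDist_eq (y : Euc d) (V : Submodule ℝ (Euc d)) :
    angDist y V = ‖Vᗮ.starProjection y‖ / ‖y‖ := by
  rw [angDist, Submodule.infDist_eq_norm_starProjection_orthogonal, map_smul, norm_smul,
    norm_inv, norm_norm, inv_mul_eq_div]

theorem angLine_map (e : Euc d ≃ₗᵢ[ℝ] Euc d) (x : Euc d) (W : Submodule ℝ (Euc d)) :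
    angLine x (W.map (e.toLinearEquiv : Euc d →ₗ[ℝ] Euc d)) = angLine (e.symm x) W := by
  rw [angLine_eq, angLine_eq, Submodule.norm_starProjection_orthogonal_map,
    LinearIsometryEquiv.norm_map]

theorem angDist_map (e : Euc d ≃ₗᵢ[ℝ] Euc d) (y : Euc d) (V : Submodule ℝ (Euc d)) :
    angDist y (V.map (e.toLinearEquiv : Euc d →ₗ[ℝ] Euc d)) = angDist (e.symm y) V := by
  rw [angDist_eq, angDist_eq, Submodule.norm_starProjection_orthogonal_map,
    LinearIsometryEquiv.norm_map]

theorem stdSpanLT_eq_coordSpan (r : ℕ) : stdSpanLT d r = coordSpan {i : Fin d | (i : ℕ) < r} :=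
  rfl

theorem stdSpanGE_eq_coordSpan (r : ℕ) :
    stdSpanGE d r = coordSpan {i : Fin d | (i : ℕ) < r}ᶜ := by
  simp only [stdSpanGE, coordSpan, Set.compl_ofPred, not_lt]

end Angles

theorem stmt3 {d r : ℕ} (hrd : r < d)
    (g : Euc d →ₗ[ℝ] Euc d)
    -- Cartan decomposition `g = k ∘ diag σ ∘ l` with `σ_1 ≥ ... ≥ σ_d > 0`
    (k l : Euc d ≃ₗᵢ[ℝ] Euc d) (σ : Fin d → ℝ) (hσmono : Antitone σ) (hσpos : ∀ i, 0 < σ i)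
    (hcartan : ∀ x : Euc d, ∀ i : Fin d, k.symm (g x) i = σ i * l x i)
    (x : Euc d) :
    angLine x ((stdSpanGE d r).map (l.symm.toLinearEquiv : Euc d →ₗ[ℝ] Euc d)) *
        angDist (g x) ((stdSpanLT d r).map (k.toLinearEquiv : Euc d →ₗ[ℝ] Euc d)) ≤
      σ ⟨r, hrd⟩ / σ ⟨r - 1, by omega⟩ := by
  rw [angLine_map, angDist_map, LinearIsometryEquiv.symm_symm, angLine_eq, angDist_eq,
    stdSpanGE_eq_coordSpan, stdSpanLT_eq_coordSpan]
  simp only [orthogonal_coordSpan, compl_compl]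
  refine norm_starProjection_coordSpan_div_mul_le (hσpos _) (hσpos _).le (fun i hi => ?_)
    (fun i hi => ?_) (hcartan x)
  · rw [abs_of_pos (hσpos i)]
    exact hσmono (Fin.le_def.2 (by simp at hi ⊢; omega))
  · rw [abs_of_pos (hσpos i)]
    exact hσmono (Fin.le_def.2 (by simpa using hi))
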